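/- Let G = (V,E) be a finite graph with real couplings J_e and p_e = 1 - e^{-2βJ_e}. For two vertices i, j, the thermal correlation satisfies ⟨σᵢσⱼ⟩ := Z^{-1} ∑_σ σᵢσⱼ ∏_e e^{βJ_e(σᵢσⱼ-1)} = Z^{-1} ∑_{C ⊆ E} 2^{k(C)} γᵢⱼ(C) ∏_{e∈C} p_e ∏_{e∉C}(1-p_e), where γᵢⱼ(C) = 1 if i and j are in the same connected component of (V, C) and 0 otherwise, and Z is the common normalization. -/
import Mathlib

open Finset

/-- The spin value associated to a Boolean: `true ↦ 1`, `false ↦ -1`. -/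
def spin (b : Bool) : ℝ := if b then 1 else -1

/-- The simple graph on `V` whose edges are the (symmetrizations of the) pairs in `C`. -/
def graphOf {V : Type*} (C : Finset (V × V)) : SimpleGraph V :=
  SimpleGraph.fromEdgeSet ((fun p : V × V => s(p.1, p.2)) '' (C : Set (V × V)))

/-- The number of connected components `k(C)` of the spanning subgraph `(V, C)`. -/
noncomputable def numComponents {V : Type*} (C : Finset (V × V)) : ℕ :=
  Nat.card (graphOf C).ConnectedComponent

open scoped Classical

lemma graphOf_adj {V : Type*} {C : Finset (V × V)} {u v : V} :
    (graphOf C).Adj u v ↔ u ≠ v ∧ ((u, v) ∈ C ∨ (v, u) ∈ C) := by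
  simp only [graphOf, SimpleGraph.fromEdgeSet_adj, Set.mem_image, Finset.mem_coe]
  constructor
  · rintro ⟨⟨p, hp, hpe⟩, hne⟩
    rw [Sym2.eq_iff] at hpe
    refine ⟨hne, ?_⟩
    rcases hpe with ⟨h1, h2⟩ | ⟨h1, h2⟩
    · left; rwa [show ((u, v) : V × V) = p from Prod.ext h1.symm h2.symm]
    · right; rwa [show ((v, u) : V × V) = p from Prod.ext h1.symm h2.symm]
  · rintro ⟨hne, h | h⟩
    · exact ⟨⟨(u, v), h, rfl⟩, hne⟩
    · exact ⟨⟨(v, u), h, Sym2.eq_swap⟩, hne⟩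

lemma const_of_edges {V : Type*} {C : Finset (V × V)} {σ : V → Bool}
    (h : ∀ e ∈ C, σ e.1 = σ e.2) {u v : V}
    (hr : (graphOf C).Reachable u v) : σ u = σ v := by
  obtain ⟨p⟩ := hr
  induction p with
  | nil => rfl
  | cons hadj _ ih =>
    obtain ⟨_, h1 | h1⟩ := graphOf_adj.mp hadj
    · exact (h _ h1).trans ih
    · exact ((h _ h1).symm).trans ih

lemma spin_mul_self (b : Bool) : spin b * spin b = 1 := by
  cases b <;> simp [spin]

lemma spin_not (b : Bool) : spin (!b) = -spin b := by
  cases b <;> simp [spin]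

lemma card_const {V : Type*} [Fintype V] [DecidableEq V] (C : Finset (V × V)) :
    (univ.filter fun σ : V → Bool => ∀ e ∈ C, σ e.1 = σ e.2).card
      = 2 ^ numComponents C := by
  have e : {σ : V → Bool // ∀ e ∈ C, σ e.1 = σ e.2} ≃
      ((graphOf C).ConnectedComponent → Bool) :=
    { toFun := fun s => SimpleGraph.ConnectedComponent.lift s.1
        (fun v w p _ => const_of_edges s.2 ⟨p⟩)
      invFun := fun g => ⟨fun v => g ((graphOf C).connectedComponentMk v), by
        intro e he
        by_cases h12 : e.1 = e.2
        · rw [h12]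
        · have : (graphOf C).Adj e.1 e.2 := graphOf_adj.mpr ⟨h12, Or.inl he⟩
          exact congrArg g (SimpleGraph.ConnectedComponent.connectedComponentMk_eq_of_adj this)⟩
      left_inv := fun s => Subtype.ext (funext fun v => rfl)
      right_inv := fun g => funext fun c => by
        induction c using SimpleGraph.ConnectedComponent.ind
        rfl }
  rw [← Fintype.card_subtype]
  rw [Fintype.card_congr e, Fintype.card_fun, Fintype.card_bool, numComponents,
    Nat.card_eq_fintype_card]

lemma key {V : Type*} [Fintype V] [DecidableEq V] (C : Finset (V × V)) (i j : V) :
    (∑ σ : V → Bool, spin (σ i) * spin (σ j) *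
        ∏ e ∈ C, (if σ e.1 = σ e.2 then (1 : ℝ) else 0))
      = 2 ^ numComponents C * (if (graphOf C).Reachable i j then (1 : ℝ) else 0) := by
  have hprod : ∀ σ : V → Bool,
      (∏ e ∈ C, (if σ e.1 = σ e.2 then (1 : ℝ) else 0))
        = if (∀ e ∈ C, σ e.1 = σ e.2) then (1 : ℝ) else 0 := fun σ => by
    simp [Finset.prod_boole]
  by_cases hij : (graphOf C).Reachable i j
  · simp only [hprod, hij, if_true, mul_one,
      mul_ite, mul_zero]
    rw [Finset.sum_ite, Finset.sum_const_zero, add_zero]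
    have : ∀ σ ∈ univ.filter fun σ : V → Bool => ∀ e ∈ C, σ e.1 = σ e.2,
        spin (σ i) * spin (σ j) = 1 := by
      intro σ hσ
      rw [Finset.mem_filter] at hσ
      rw [const_of_edges hσ.2 hij, spin_mul_self]
    rw [Finset.sum_congr rfl this, Finset.sum_const, card_const, nsmul_eq_mul]
    push_cast
    ring
  · simp only [hij, if_false, mul_zero]
    -- involution flipping spins on the component of i
    set τ : (V → Bool) → (V → Bool) := fun σ v =>
      if (graphOf C).Reachable i v then !(σ v) else σ v with hτ
    have hinv : Function.Involutive τ := by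
      intro σ; funext v; simp only [hτ]
      by_cases h : (graphOf C).Reachable i v <;> simp [h]
    set F : (V → Bool) → ℝ := fun σ => spin (σ i) * spin (σ j) *
        ∏ e ∈ C, (if σ e.1 = σ e.2 then (1 : ℝ) else 0) with hF
    have hneg : ∀ σ, F (τ σ) = -F σ := by
      intro σ
      have hpe : ∀ e ∈ C, (τ σ e.1 = τ σ e.2) ↔ (σ e.1 = σ e.2) := by
        intro e he
        by_cases h12 : e.1 = e.2
        · rw [h12]; simp
        · have hadj : (graphOf C).Adj e.1 e.2 := graphOf_adj.mpr ⟨h12, Or.inl he⟩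
          have hiff : (graphOf C).Reachable i e.1 ↔ (graphOf C).Reachable i e.2 :=
            ⟨fun h => h.trans hadj.reachable, fun h => h.trans hadj.symm.reachable⟩
          by_cases h1 : (graphOf C).Reachable i e.1
          · have h2 := hiff.mp h1
            simp [hτ, h1, h2]
          · have h2 : ¬(graphOf C).Reachable i e.2 := fun h => h1 (hiff.mpr h)
            simp [hτ, h1, h2]
      have hP : (∏ e ∈ C, (if τ σ e.1 = τ σ e.2 then (1 : ℝ) else 0))
          = ∏ e ∈ C, (if σ e.1 = σ e.2 then (1 : ℝ) else 0) :=
        Finset.prod_congr rfl fun e he => by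
          by_cases h : σ e.1 = σ e.2
          · simp [h, (hpe e he).mpr h]
          · rw [if_neg h, if_neg (fun hh => h ((hpe e he).mp hh))]
      have hi : τ σ i = !(σ i) := by
        simp only [hτ]; rw [if_pos]; exact SimpleGraph.Reachable.refl i
      have hj : τ σ j = σ j := by simp [hτ, hij]
      simp only [hF, hP, hi, hj, spin_not]
      ring
    have hsum : (∑ σ : V → Bool, F σ) = ∑ σ : V → Bool, F (τ σ) :=
      (Fintype.sum_equiv hinv.toPerm _ _ (fun σ => rfl)).symm
    have h2 : (∑ σ : V → Bool, F (τ σ)) = -∑ σ : V → Bool, F σ := by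
      rw [Finset.sum_congr rfl (fun σ _ => hneg σ), Finset.sum_neg_distrib]
    have : (∑ σ : V → Bool, F σ) = -∑ σ : V → Bool, F σ := hsum.trans h2
    linarith [this]

open scoped Classical in
/-- Spin–spin correlations equal cluster connectivities in the (generalized, possibly
signed) random-cluster representation: with `p_e = 1 - e^{-2βJ_e}` and
`γᵢⱼ(C) = [i and j in the same component of (V,C)]`,
`Z⁻¹ ∑_σ σᵢσⱼ ∏_e e^{βJ_e(σᵤσᵥ-1)} = Z⁻¹ ∑_{C⊆E} 2^{k(C)} γᵢⱼ(C) ∏_{e∈C} p_e ∏_{e∉C}(1-p_e)`. -/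
theorem stmt4 {V : Type*} [Fintype V] [DecidableEq V] (E : Finset (V × V))
    (β : ℝ) (J : V × V → ℝ) (i j : V)
    (Z : ℝ)
    (hZ : Z = ∑ σ : V → Bool,
        ∏ e ∈ E, Real.exp (β * J e * (spin (σ e.1) * spin (σ e.2) - 1)))
    (hZne : Z ≠ 0) :
    Z⁻¹ * (∑ σ : V → Bool,
        spin (σ i) * spin (σ j) *
          ∏ e ∈ E, Real.exp (β * J e * (spin (σ e.1) * spin (σ e.2) - 1))) =
      Z⁻¹ * ∑ C ∈ E.powerset,
        (2 : ℝ) ^ numComponents C *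
          (if (graphOf C).Reachable i j then (1 : ℝ) else 0) *
          (∏ e ∈ C, (1 - Real.exp (-(2 * β * J e)))) *
          (∏ e ∈ E \ C, (1 - (1 - Real.exp (-(2 * β * J e))))) := by
  congr 1
  have hfac : ∀ (σ : V → Bool) (e : V × V),
      Real.exp (β * J e * (spin (σ e.1) * spin (σ e.2) - 1))
        = (1 - Real.exp (-(2 * β * J e))) * (if σ e.1 = σ e.2 then (1 : ℝ) else 0)
          + (1 - (1 - Real.exp (-(2 * β * J e)))) := by
    intro σ e
    by_cases h : σ e.1 = σ e.2
    · have : spin (σ e.1) * spin (σ e.2) = 1 := by rw [h]; exact spin_mul_self _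
      rw [this, if_pos h]
      norm_num
    · have : spin (σ e.1) * spin (σ e.2) = -1 := by
        cases h1 : σ e.1 <;> cases h2 : σ e.2 <;> simp_all [spin]
      rw [this, if_neg h, show β * J e * (-1 - 1) = -(2 * β * J e) by ring]
      ring
  calc (∑ σ : V → Bool, spin (σ i) * spin (σ j) *
          ∏ e ∈ E, Real.exp (β * J e * (spin (σ e.1) * spin (σ e.2) - 1)))
      = ∑ σ : V → Bool, ∑ C ∈ E.powerset,
          spin (σ i) * spin (σ j) *
            ((∏ e ∈ C, (1 - Real.exp (-(2 * β * J e))) * (if σ e.1 = σ e.2 then (1:ℝ) else 0)) *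
             ∏ e ∈ E \ C, (1 - (1 - Real.exp (-(2 * β * J e))))) := by
        refine Finset.sum_congr rfl fun σ _ => ?_
        rw [Finset.prod_congr rfl (fun e _ => hfac σ e), Finset.prod_add, Finset.mul_sum]
    _ = ∑ C ∈ E.powerset, ∑ σ : V → Bool,
          spin (σ i) * spin (σ j) *
            ((∏ e ∈ C, (1 - Real.exp (-(2 * β * J e))) * (if σ e.1 = σ e.2 then (1:ℝ) else 0)) *
             ∏ e ∈ E \ C, (1 - (1 - Real.exp (-(2 * β * J e))))) := Finset.sum_comm
    _ = ∑ C ∈ E.powerset,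
        (2 : ℝ) ^ numComponents C *
          (if (graphOf C).Reachable i j then (1 : ℝ) else 0) *
          (∏ e ∈ C, (1 - Real.exp (-(2 * β * J e)))) *
          (∏ e ∈ E \ C, (1 - (1 - Real.exp (-(2 * β * J e))))) := by
        refine Finset.sum_congr rfl fun C _ => ?_
        rw [← key C i j, Finset.sum_mul, Finset.sum_mul]
        refine Finset.sum_congr rfl fun σ _ => ?_
        rw [Finset.prod_mul_distrib]
        ring
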